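/- For vectors k₁,...,k_{n+1} ∈ F₂ⁿ, det₂(k₁,...,k_{n+1}) = Σ_{1 ≤ i < j ≤ n+1} Δ_{ij}, where Δ_{ij} is the determinant of the n×n matrix whose first n−1 columns are the vectors k₁,...,k_{n+1} with kᵢ and kⱼ deleted (in order), and whose last column is the coordinate-wise product of kᵢ and kⱼ. -/

import Mathlib

/-
Over `F₂` the product `∏ₜ ⟨kₜ, x⟩` is the indicator of `K x = 𝟙`, where `K` has rows `kₜ`, so
`∑ₓ ∏ₜ ⟨kₜ, x⟩` is the parity of the number of solutions of `K x = 𝟙`. If `rank K < n` the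
solutions come in pairs `x, x + z` with `K z = 0`; if `rank K = n` the range of `K` is the
hyperplane `λ ⬝ y = 0`, so there is exactly one solution when `∑ λᵢ = 0` and none otherwise.
Either way the parity is `det₂ k`.

Expanding the product over `t` and summing over `x` first, a term indexed by
`g : Fin (n+1) → Fin n` survives iff `g` is surjective. A surjection identifies exactly one pair
`i < j`, and the surjections identifying `i, j` correspond to the permutations in the expansion of
`Δᵢⱼ`; in characteristic two the signs do not matter.
-/

open Classical in
/-- The 2-determinant of `n+1` vectors in `F₂ⁿ`: equals `0` if the rank of the vectors
is less than `n`, and `∑ λᵢ + 1` for the unique nonzero relation `∑ λᵢ kᵢ = 0` otherwise. -/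
noncomputable def det2 (n : ℕ) (k : Fin (n + 1) → Fin n → ZMod 2) : ZMod 2 :=
  if h : Module.finrank (ZMod 2) (Submodule.span (ZMod 2) (Set.range k)) = n ∧
      ∃ lam : Fin (n + 1) → ZMod 2, lam ≠ 0 ∧ ∀ j, ∑ i, lam i * k i j = 0
  then (∑ i, h.2.choose i) + 1
  else 0

open Finset Matrix Function

lemma ZMod.prod_eq_ite_forall_eq_one {ι : Type*} (s : Finset ι) (a : ι → ZMod 2) :
    ∏ i ∈ s, a i = if ∀ i ∈ s, a i = 1 then 1 else 0 := by
  split_ifs with h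
  · exact prod_eq_one h
  · push Not at h
    obtain ⟨i, hi, hai⟩ := h
    exact prod_eq_zero hi ((by decide : ∀ b : ZMod 2, b ≠ 1 → b = 0) _ hai)

lemma sum_prod_eq_card_eq_one {V ι : Type*} [Fintype V] [Fintype ι] [DecidableEq ι]
    (F : V → ι → ZMod 2) :
    ∑ x, ∏ t, F x t = (#{x | F x = 1} : ZMod 2) := by
  simp [funext_iff, ZMod.prod_eq_ite_forall_eq_one]

open Classical in
theorem LinearMap.card_fiber_zmod_two {V W : Type*} [AddCommGroup V] [Module (ZMod 2) V]
    [Fintype V] [AddCommGroup W] [Module (ZMod 2) W] [DecidableEq W]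
    (f : V →ₗ[ZMod 2] W) (w : W) :
    (#{x | f x = w} : ZMod 2) = if w ∈ range f ∧ Injective f then 1 else 0 := by
  by_cases hf : Injective f
  · by_cases hw : w ∈ range f
    · obtain ⟨x, rfl⟩ := hw
      have : ({y | f y = f x} : Finset V) = {x} := by ext y; simp [hf.eq_iff]
      simp [this, hf]
    · have : ({y | f y = w} : Finset V) = ∅ := by
        ext y; simpa using fun h => hw ⟨y, h⟩
      simp [this, hw]
  · rw [if_neg (fun h => hf h.2)]
    obtain ⟨z, hz, hz0⟩ := (Submodule.ne_bot_iff _).mp (mt ker_eq_bot.mp hf)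
    rw [card_eq_sum_ones, Nat.cast_sum]
    refine sum_involution (fun x _ => x + z) (fun x _ => ?_) (fun x _ _ h => hz0 ?_)
      (fun x hx => ?_) (fun x _ => ?_)
    · simp [ZModModule.add_self]
    · simpa using h
    · simpa [mem_ker.mp hz] using hx
    · simp [add_assoc, ZModModule.add_self]

lemma sum_prod_comp_eq_ite_surjective {ι κ : Type*} [Fintype ι] [Fintype κ] [DecidableEq ι]
    [DecidableEq κ] (g : ι → κ) :
    ∑ x : κ → ZMod 2, ∏ t, x (g t) = if Surjective g then 1 else 0 := by
  have hinj : Injective (LinearMap.funLeft (ZMod 2) (ZMod 2) g) ↔ Surjective g :=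
    injective_comp_right_iff_surjective
  have hone : (1 : ι → ZMod 2) ∈ LinearMap.range (LinearMap.funLeft (ZMod 2) (ZMod 2) g) :=
    ⟨1, rfl⟩
  calc ∑ x : κ → ZMod 2, ∏ t, x (g t)
      = (#{x | LinearMap.funLeft (ZMod 2) (ZMod 2) g x = 1} : ZMod 2) :=
        sum_prod_eq_card_eq_one fun x => LinearMap.funLeft (ZMod 2) (ZMod 2) g x
    _ = if Surjective g then 1 else 0 := by
        simp [LinearMap.card_fiber_zmod_two, hinj, hone]

theorem Matrix.sum_prod_mulVec_eq_sum_surjective {ι κ : Type*} [Fintype ι] [Fintype κ]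
    [DecidableEq ι] [DecidableEq κ] (A : Matrix ι κ (ZMod 2)) :
    ∑ x : κ → ZMod 2, ∏ t, (A *ᵥ x) t = ∑ g with Surjective g, ∏ t, A t (g t) := by
  calc ∑ x : κ → ZMod 2, ∏ t, (A *ᵥ x) t
      = ∑ x : κ → ZMod 2, ∑ g : ι → κ, ∏ t, A t (g t) * x (g t) :=
        sum_congr rfl fun x _ => prod_univ_sum _ _
    _ = ∑ g : ι → κ, ∑ x : κ → ZMod 2, (∏ t, A t (g t)) * ∏ t, x (g t) := by
        rw [sum_comm]; simp only [prod_mul_distrib]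
    _ = ∑ g with Surjective g, ∏ t, A t (g t) := by
        rw [sum_filter]
        refine sum_congr rfl fun g _ => ?_
        rw [← mul_sum, sum_prod_comp_eq_ite_surjective, mul_ite, mul_one, mul_zero]

namespace Matrix

variable {K m n : Type*} [Field K] [Fintype m] [Fintype n]

theorem exists_vecMul_eq_zero_of_card_lt (A : Matrix m n K)
    (h : Fintype.card n < Fintype.card m) : ∃ v ≠ 0, v ᵥ* A = 0 := by
  have hker := LinearMap.ker_ne_bot_of_finrank_lt (f := A.vecMulLinear) (by simpa using h)
  obtain ⟨v, hv, hv0⟩ := (Submodule.ne_bot_iff _).mp hker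
  exact ⟨v, hv0, hv⟩

omit [Fintype m] in
theorem rank_eq_card_iff_injective (A : Matrix m n K) :
    A.rank = Fintype.card n ↔ Injective A.mulVecLin := by
  have hdim := LinearMap.finrank_range_add_finrank_ker A.mulVecLin
  rw [Module.finrank_fintype_fun_eq_card] at hdim
  rw [rank, ← LinearMap.ker_eq_bot, ← Submodule.finrank_eq_zero]
  omega

theorem mem_range_mulVecLin_iff_dotProduct_eq_zero {A : Matrix m n K}
    (hA : Injective A.mulVecLin) {v : m → K} (hv : v ≠ 0) (hvA : v ᵥ* A = 0)
    (hcard : Fintype.card m = Fintype.card n + 1) (w : m → K) :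
    w ∈ LinearMap.range A.mulVecLin ↔ v ⬝ᵥ w = 0 := by
  classical
  set χ : (m → K) →ₗ[K] K := dotProductBilin K K v
  have hχ : ∀ w, χ w = v ⬝ᵥ w := fun _ => rfl
  have hle : LinearMap.range A.mulVecLin ≤ LinearMap.ker χ := by
    rintro _ ⟨x, rfl⟩
    simp [hχ, dotProduct_mulVec, hvA]
  have hχ_surj : Surjective χ := by
    refine LinearMap.surjective_of_ne_zero fun h0 => hv (funext fun i => ?_)
    simpa [hχ] using LinearMap.congr_fun h0 (Pi.single i 1)
  have hker := LinearMap.finrank_range_add_finrank_ker χ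
  rw [LinearMap.range_eq_top.mpr hχ_surj, finrank_top, Module.finrank_self,
    Module.finrank_fintype_fun_eq_card, hcard] at hker
  have heq : LinearMap.range A.mulVecLin = LinearMap.ker χ :=
    Submodule.eq_of_le_of_finrank_eq hle (by
      rw [LinearMap.finrank_range_of_inj hA, Module.finrank_fintype_fun_eq_card]; omega)
  rw [heq, LinearMap.mem_ker, hχ]

end Matrix

theorem det2_eq_card_mulVec_eq_one (n : ℕ) (k : Fin (n + 1) → Fin n → ZMod 2) :
    det2 n k = (#{x | of k *ᵥ x = 1} : ZMod 2) := by
  have hrank : (of k).rank = Module.finrank (ZMod 2) (Submodule.span (ZMod 2) (Set.range k)) :=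
    rank_eq_finrank_span_row _
  refine Eq.trans ?_ ((of k).mulVecLin.card_fiber_zmod_two 1).symm
  rw [det2]
  split
  next h =>
    obtain ⟨hlam0, hlam⟩ := h.2.choose_spec
    have hinj : Injective (of k).mulVecLin :=
      (rank_eq_card_iff_injective _).mp (by simpa [hrank] using h.1)
    have hvA : h.2.choose ᵥ* of k = 0 := funext hlam
    rw [mem_range_mulVecLin_iff_dotProduct_eq_zero hinj hlam0 hvA (by simp), dotProduct_one]
    simpa [hinj] using (by decide : ∀ s : ZMod 2, s + 1 = if s = 0 then 1 else 0) _
  next h =>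
    refine (if_neg fun hsol => h ⟨?_, ?_⟩).symm
    · simpa [hrank] using (rank_eq_card_iff_injective _).mpr hsol.2
    · simpa [vecMul, dotProduct, funext_iff] using exists_vecMul_eq_zero_of_card_lt (of k) (by simp)

theorem Matrix.det_eq_permanent_of_charTwo {n R : Type*} [DecidableEq n] [Fintype n]
    [CommRing R] [CharP R 2] (M : Matrix n n R) : M.det = M.permanent := by
  rw [det_apply', permanent]
  refine sum_congr rfl fun σ _ => ?_
  rcases Int.units_eq_one_or (Equiv.Perm.sign σ) with h | h <;> simp [h, CharTwo.neg_eq]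

section Collapsing

variable {n : ℕ}

/-- The surjections `Fin (n + 1) → Fin n` whose only collision is `{i, j}`. -/
def collapsingMaps (i j : Fin (n + 1)) : Finset (Fin (n + 1) → Fin n) :=
  {g | g i = g j ∧ Injective (g ∘ j.succAbove)}

lemma eq_or_eq_of_injective_comp_succAbove {α : Type*} {g : Fin (n + 1) → α} {j a b : Fin (n + 1)}
    (hg : Injective (g ∘ j.succAbove)) (hab : a ≠ b) (h : g a = g b) : a = j ∨ b = j := by
  by_contra! hne
  obtain ⟨a', rfl⟩ := Fin.exists_succAbove_eq hne.1
  obtain ⟨b', rfl⟩ := Fin.exists_succAbove_eq hne.2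
  exact hab (congrArg _ (hg h))

lemma eq_of_mem_collapsingMaps {i j i' j' : Fin (n + 1)} {g : Fin (n + 1) → Fin n}
    (hij : i < j) (hij' : i' < j') (hg : g ∈ collapsingMaps i j) (hg' : g ∈ collapsingMaps i' j') :
    i = i' ∧ j = j' := by
  simp only [collapsingMaps, mem_filter, mem_univ, true_and] at hg hg'
  have hj : j = j' := by
    by_contra hjj
    have h1 := (eq_or_eq_of_injective_comp_succAbove hg.2 hij'.ne hg'.1).resolve_right (Ne.symm hjj)
    have h2 := (eq_or_eq_of_injective_comp_succAbove hg'.2 hij.ne hg.1).resolve_right hjj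
    subst h1 h2
    exact lt_asymm hij hij'
  subst hj
  refine ⟨by_contra fun hii => ?_, rfl⟩
  rcases eq_or_eq_of_injective_comp_succAbove hg.2 hii (hg.1.trans hg'.1.symm) with h | h
  · exact hij.ne h
  · exact hij'.ne h

lemma surjective_of_mem_collapsingMaps {i j : Fin (n + 1)} {g : Fin (n + 1) → Fin n}
    (hg : g ∈ collapsingMaps i j) : Surjective g := by
  simp only [collapsingMaps, mem_filter, mem_univ, true_and] at hg
  exact fun c => ⟨_, (Finite.injective_iff_surjective.mp hg.2 c).choose_spec⟩

lemma exists_mem_collapsingMaps {g : Fin (n + 1) → Fin n} (hg : Surjective g) :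
    ∃ i j, i < j ∧ g ∈ collapsingMaps i j := by
  obtain ⟨a, b, hab, h⟩ := Fintype.exists_ne_map_eq_of_card_lt g (by simp)
  wlog hlt : a < b generalizing a b
  · exact this b a hab.symm h.symm (hab.lt_or_gt.resolve_left hlt)
  have hinj : Surjective (g ∘ b.succAbove) := fun c => by
    obtain ⟨t, rfl⟩ := hg c
    by_cases htb : t = b
    · obtain ⟨a', ha'⟩ := Fin.exists_succAbove_eq hlt.ne
      exact ⟨a', by simp [ha', h, htb]⟩
    · obtain ⟨t', ht'⟩ := Fin.exists_succAbove_eq htb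
      exact ⟨t', by simp [ht']⟩
  exact ⟨a, b, hlt, by
    simpa [collapsingMaps, h] using Finite.injective_iff_surjective.mpr hinj⟩

lemma sum_collapsingMaps_eq_det {R : Type*} [CommRing R] [CharP R 2]
    (k : Fin (n + 1) → Fin n → R) (j : Fin (n + 1)) (r₀ : Fin n) :
    ∑ g ∈ collapsingMaps (j.succAbove r₀) j, ∏ t, k t (g t) =
      det (of fun r c => update k (j.succAbove r₀)
        (fun t => k (j.succAbove r₀) t * k j t) (j.succAbove r) c) := by
  rw [det_eq_permanent_of_charTwo, ← permanent_transpose, permanent]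
  symm
  refine sum_bij (fun σ _ => Fin.insertNth j (σ r₀) σ) (fun σ _ => ?_) (fun σ _ τ _ h => ?_)
    (fun g hg => ?_) (fun σ _ => ?_)
  · simpa [collapsingMaps, comp_def] using σ.injective
  · exact Equiv.ext fun r => by simpa using congrFun h (j.succAbove r)
  · simp only [collapsingMaps, mem_filter, mem_univ, true_and] at hg
    refine ⟨Equiv.ofBijective _ (Finite.injective_iff_bijective.mp hg.2), mem_univ _, ?_⟩
    change Fin.insertNth j (g (j.succAbove r₀)) (g ∘ j.succAbove) = g
    rw [hg.1]
    exact Fin.insertNth_self_removeNth j g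
  · have hupd : ∀ r, update k (j.succAbove r₀) (fun t => k (j.succAbove r₀) t * k j t)
        (j.succAbove r) (σ r) = update (fun r => k (j.succAbove r) (σ r)) r₀
          (k (j.succAbove r₀) (σ r₀) * k j (σ r₀)) r := by
      intro r
      by_cases hr : r = r₀
      · subst hr; simp
      · simp [hr]
    simp only [transpose_apply, of_apply, hupd, prod_update_of_mem (mem_univ r₀),
      Fin.prod_univ_succAbove _ j, Fin.insertNth_apply_same, Fin.insertNth_apply_succAbove,
      prod_eq_mul_prod_sdiff_singleton_of_mem (mem_univ r₀) (fun r => k (j.succAbove r) (σ r))]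
    ring

theorem sum_det_update_eq_sum_surjective {R : Type*} [CommRing R] [CharP R 2]
    (k : Fin (n + 1) → Fin n → R) :
    ∑ j : Fin (n + 1), ∑ i ∈ Iio j,
      det (of fun r c => update k i (fun t => k i t * k j t) (j.succAbove r) c) =
        ∑ g with Surjective g, ∏ t, k t (g t) := by
  set pairs : Finset (Fin (n + 1) × Fin (n + 1)) := {p | p.2 < p.1}
  have hdisj : (pairs : Set (Fin (n + 1) × Fin (n + 1))).PairwiseDisjoint
      fun p => collapsingMaps p.2 p.1 := by
    intro p hp q hq hpq
    refine disjoint_left.mpr fun g hgp hgq => hpq ?_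
    obtain ⟨h2, h1⟩ := eq_of_mem_collapsingMaps (by simpa [pairs] using hp)
      (by simpa [pairs] using hq) hgp hgq
    exact Prod.ext h1 h2
  have hunion : pairs.biUnion (fun p => collapsingMaps p.2 p.1) =
      ({g | Surjective g} : Finset (Fin (n + 1) → Fin n)) := by
    ext g
    simp only [mem_biUnion, mem_filter, mem_univ, true_and, pairs, Prod.exists]
    exact ⟨fun ⟨_, _, _, hg⟩ => surjective_of_mem_collapsingMaps hg,
      fun hg => (exists_mem_collapsingMaps hg).elim fun i ⟨j, hij, hg⟩ => ⟨j, i, hij, hg⟩⟩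
  calc ∑ j : Fin (n + 1), ∑ i ∈ Iio j,
        det (of fun r c => update k i (fun t => k i t * k j t) (j.succAbove r) c)
      = ∑ j : Fin (n + 1), ∑ i ∈ Iio j, ∑ g ∈ collapsingMaps i j, ∏ t, k t (g t) := by
        refine sum_congr rfl fun j _ => sum_congr rfl fun i hi => ?_
        obtain ⟨r₀, rfl⟩ := Fin.exists_succAbove_eq (mem_Iio.mp hi).ne
        exact (sum_collapsingMaps_eq_det k j r₀).symm
    _ = ∑ p ∈ pairs, ∑ g ∈ collapsingMaps p.2 p.1, ∏ t, k t (g t) :=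
        (sum_finset_product' pairs univ Iio (by simp [pairs])).symm
    _ = ∑ g with Surjective g, ∏ t, k t (g t) := by
        rw [← sum_biUnion hdisj, hunion]

end Collapsing

/-- explicit formula for `det₂`: `det₂(k₁,…,k_{n+1}) = ∑_{i<j} Δ_{ij}`, where
`Δ_{ij}` is the `F₂`-determinant of the `n×n` matrix whose columns (here realized as rows,
which does not affect the determinant mod 2) are the vectors `k₁,…,k_{n+1}` with `kᵢ`, `kⱼ`
deleted together with the coordinate-wise product of `kᵢ` and `kⱼ`. -/
theorem det2_formula (n : ℕ) (k : Fin (n + 1) → Fin n → ZMod 2) :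
    det2 n k = ∑ j : Fin (n + 1), ∑ i ∈ Finset.Iio j,
      Matrix.det (Matrix.of fun (r c : Fin n) =>
        Function.update k i (fun t => k i t * k j t) (j.succAbove r) c) := by
  rw [det2_eq_card_mulVec_eq_one, ← sum_prod_eq_card_eq_one,
    (of k).sum_prod_mulVec_eq_sum_surjective, sum_det_update_eq_sum_surjective]
  rfl
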